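/- There exist transcendental entire functions f, g and h generating a non-trivial transcendental semigroup S = ⟨f, g, h⟩, and a simply connected domain D, such that D ⊆ F(S) and, for every φ ∈ S, D lies in a periodic component of F(φ). -/

import Mathlib

open Complex Filter Topology

/-- A transcendental entire function: complex-differentiable on all of `ℂ` and
not equal to (the evaluation of) any polynomial. -/
def TranscendentalEntire (f : ℂ → ℂ) : Prop :=
  Differentiable ℂ f ∧ ¬ ∃ p : Polynomial ℂ, ∀ z : ℂ, f z = p.eval z

/-- A family `𝔉` of functions is normal on a set `U ⊆ ℂ`: every sequence of members of `𝔉`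
has a subsequence that either converges locally uniformly on `U` to a limit function, or
diverges to `∞` uniformly on every compact subset of `U`. -/
def NormalOn (𝔉 : Set (ℂ → ℂ)) (U : Set ℂ) : Prop :=
  ∀ s : ℕ → ℂ → ℂ, (∀ n, s n ∈ 𝔉) →
    ∃ φ : ℕ → ℕ, StrictMono φ ∧
      ((∃ g : ℂ → ℂ, TendstoLocallyUniformlyOn (fun n => s (φ n)) g atTop U) ∨
       (∀ K : Set ℂ, K ⊆ U → IsCompact K →
          ∀ M : ℝ, ∀ᶠ n in atTop, ∀ z ∈ K, M ≤ ‖s (φ n) z‖))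

/-- The Fatou set of a family of functions: points having an open neighborhood on which
the family is normal. -/
def fatouSetOfFamily (𝔉 : Set (ℂ → ℂ)) : Set ℂ :=
  {z | ∃ U : Set ℂ, IsOpen U ∧ z ∈ U ∧ NormalOn 𝔉 U}

/-- The family of (positive) iterates of a function. -/
def iteratesOf (f : ℂ → ℂ) : Set (ℂ → ℂ) := {g | ∃ n : ℕ, 0 < n ∧ g = f^[n]}

/-- The Fatou set of a single function `f`: points near which the family of iterates of `f`
is normal. -/
def fatouSet (f : ℂ → ℂ) : Set ℂ := fatouSetOfFamily (iteratesOf f)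

/-- `U` is a Fatou component of `f`: a connected component of the Fatou set of `f`. -/
def IsFatouComponent (f : ℂ → ℂ) (U : Set ℂ) : Prop :=
  ∃ z ∈ fatouSet f, U = connectedComponentIn (fatouSet f) z

/-- `U` is a periodic Fatou component of `f`: some iterate maps `U` back into `U`
(i.e. `Uₙ = U` for some `n ≥ 1`). -/
def IsPeriodicComponent (f : ℂ → ℂ) (U : Set ℂ) : Prop :=
  IsFatouComponent f U ∧ ∃ n : ℕ, 0 < n ∧ f^[n] '' U ⊆ U

/-- `U` is a pre-periodic Fatou component of `f`: `Uₙ = Uₘ` for some `n > m ≥ 0`,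
i.e. `fⁿ(U)` and `fᵐ(U)` lie in the same Fatou component. -/
def IsPreperiodicComponent (f : ℂ → ℂ) (U : Set ℂ) : Prop :=
  IsFatouComponent f U ∧ ∃ n m : ℕ, m < n ∧ ∀ z ∈ U,
    connectedComponentIn (fatouSet f) (f^[n] z) = connectedComponentIn (fatouSet f) (f^[m] z)

/-- `U` is a wandering Fatou component of `f`: a Fatou component that is not pre-periodic. -/
def IsWanderingComponent (f : ℂ → ℂ) (U : Set ℂ) : Prop :=
  IsFatouComponent f U ∧ ¬ ∃ n m : ℕ, m < n ∧ ∀ z ∈ U,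
    connectedComponentIn (fatouSet f) (f^[n] z) = connectedComponentIn (fatouSet f) (f^[m] z)

/-- A (plane) domain: a nonempty open connected subset of `ℂ`. -/
def IsPlaneDomain (D : Set ℂ) : Prop := IsOpen D ∧ IsConnected D

/-- `D` lies in a wandering component of the Fatou set of `f`. -/
def LiesInWanderingComponent (f : ℂ → ℂ) (D : Set ℂ) : Prop :=
  ∃ U : Set ℂ, IsWanderingComponent f U ∧ D ⊆ U

/-- `D` lies in a pre-periodic component of the Fatou set of `f`. -/
def LiesInPreperiodicComponent (f : ℂ → ℂ) (D : Set ℂ) : Prop :=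
  ∃ U : Set ℂ, IsPreperiodicComponent f U ∧ D ⊆ U

/-- `D` lies in a periodic component of the Fatou set of `f`. -/
def LiesInPeriodicComponent (f : ℂ → ℂ) (D : Set ℂ) : Prop :=
  ∃ U : Set ℂ, IsPeriodicComponent f U ∧ D ⊆ U

/-- Membership in the semigroup (under composition) generated by a set `A` of functions. -/
inductive InSemigroup (A : Set (ℂ → ℂ)) : (ℂ → ℂ) → Prop
  | base : ∀ {f}, f ∈ A → InSemigroup A f
  | comp : ∀ {f g}, InSemigroup A f → InSemigroup A g → InSemigroup A (f ∘ g)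

/-- The semigroup generated by a set of functions. -/
def semigroupGen (A : Set (ℂ → ℂ)) : Set (ℂ → ℂ) := {h | InSemigroup A h}

/-- A semigroup of functions is trivial (cyclic) if it is of the form `{φⁿ : n ≥ 1}`
for a single function `φ`. -/
def IsTrivialSemigroup (S : Set (ℂ → ℂ)) : Prop :=
  ∃ φ : ℂ → ℂ, S = iteratesOf φ



/-!
All three generators `z ↦ a (eᶻ - 1)`, `|a| = 1/8`, fix `0` and map the closed unit disk into
itself with `|f z| ≤ |z|/4`. Hence a composition of `k` generators is bounded by `4⁻ᵏ` on the disk,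
and since only finitely many elements of the semigroup are words of length `< k`, every sequence
in the semigroup has either a constant subsequence or tends to `0` uniformly on the disk: the disk
`D` lies in the Fatou set of the semigroup, and so of every element `φ`. Being an open map, `φ`
maps its Fatou set into itself; as it fixes `0 ∈ D`, it maps the component containing `D` into
itself. Finally, the semigroup is not cyclic: in `{φⁿ}` the modulus `|φ'(0)|ⁿ` of the multiplier
at `0` determines `n`, yet the generators with `a = ±1/8` have distinct multipliers of equal
modulus.
-/

open Function Metric Set

lemma semigroupGen_subset {A P : Set (ℂ → ℂ)} (hA : A ⊆ P)
    (hP : ∀ f ∈ P, ∀ g ∈ P, f ∘ g ∈ P) : semigroupGen A ⊆ P := by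
  intro s hs
  induction hs with
  | base hf => exact hA hf
  | comp _ _ ihf ihg => exact hP _ ihf _ ihg

lemma InSemigroup.mem_or_exists_comp {A : Set (ℂ → ℂ)} {s : ℂ → ℂ}
    (hs : InSemigroup A s) : s ∈ A ∨ ∃ f ∈ A, ∃ t, InSemigroup A t ∧ s = f ∘ t := by
  induction hs with
  | base hf => exact .inl hf
  | comp hf hg ihf _ =>
    rcases ihf with hf' | ⟨f', hf', t, ht, rfl⟩
    · exact .inr ⟨_, hf', _, hg, rfl⟩
    · exact .inr ⟨f', hf', _, ht.comp hg, rfl⟩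

lemma self_mem_iteratesOf (φ : ℂ → ℂ) : φ ∈ iteratesOf φ :=
  ⟨1, one_pos, (iterate_one φ).symm⟩

lemma iteratesOf_subset_semigroupGen {A : Set (ℂ → ℂ)} {φ : ℂ → ℂ}
    (hφ : φ ∈ semigroupGen A) : iteratesOf φ ⊆ semigroupGen A := by
  rintro _ ⟨n, hn, rfl⟩
  induction n with
  | zero => omega
  | succ n ih =>
    rcases Nat.eq_zero_or_pos n with rfl | hn
    · simpa using hφ
    · rw [iterate_succ']
      exact InSemigroup.comp hφ (ih hn)

def ContractsUnitDisk (c : ℝ) (f : ℂ → ℂ) : Prop :=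
  ∀ z : ℂ, ‖z‖ ≤ 1 → ‖f z‖ ≤ c * ‖z‖

namespace ContractsUnitDisk

variable {c d : ℝ} {f g : ℂ → ℂ}

lemma map_zero (hf : ContractsUnitDisk c f) : f 0 = 0 := by
  simpa using hf 0 (by simp)

lemma mono (hf : ContractsUnitDisk c f) (hcd : c ≤ d) : ContractsUnitDisk d f :=
  fun z hz => (hf z hz).trans (mul_le_mul_of_nonneg_right hcd (norm_nonneg z))

lemma comp (hf : ContractsUnitDisk c f) (hg : ContractsUnitDisk d g) (hc : 0 ≤ c)
    (hd : d ≤ 1) : ContractsUnitDisk (c * d) (f ∘ g) := by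
  intro z hz
  have hgz : ‖g z‖ ≤ d * ‖z‖ := hg z hz
  have hgz' : ‖g z‖ ≤ ‖z‖ := hgz.trans (mul_le_of_le_one_left (norm_nonneg z) hd)
  calc ‖f (g z)‖ ≤ c * ‖g z‖ := hf _ (hgz'.trans hz)
    _ ≤ c * (d * ‖z‖) := mul_le_mul_of_nonneg_left hgz hc
    _ = c * d * ‖z‖ := (mul_assoc _ _ _).symm

end ContractsUnitDisk

section Contracting

variable {A : Set (ℂ → ℂ)} {c : ℝ}

lemma contractsUnitDisk_one_of_mem_semigroupGen (hA : ∀ f ∈ A, ContractsUnitDisk c f)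
    (hc1 : c ≤ 1) {s : ℂ → ℂ} (hs : s ∈ semigroupGen A) : ContractsUnitDisk 1 s :=
  semigroupGen_subset (P := {f | ContractsUnitDisk 1 f}) (fun f hf => (hA f hf).mono hc1)
    (fun f hf g hg => by simpa using hf.comp hg zero_le_one le_rfl) hs

/- An element failing to contract by `c ^ (K + 1)` is a generator, or a generator composed with
an element failing to contract by `c ^ K`. -/
lemma finite_not_contractsUnitDisk_pow (hA : A.Finite) (hAc : ∀ f ∈ A, ContractsUnitDisk c f)
    (hc0 : 0 ≤ c) (hc1 : c ≤ 1) (K : ℕ) :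
    {s ∈ semigroupGen A | ¬ ContractsUnitDisk (c ^ K) s}.Finite := by
  induction K with
  | zero =>
    convert finite_empty
    ext s
    simpa using fun hs => contractsUnitDisk_one_of_mem_semigroupGen hAc hc1 hs
  | succ K ih =>
    refine (hA.union ((hA.prod ih).image fun p => p.1 ∘ p.2)).subset ?_
    rintro s ⟨hs, hbad⟩
    rcases InSemigroup.mem_or_exists_comp hs with hsA | ⟨f, hf, t, ht, rfl⟩
    · exact .inl hsA
    · refine .inr ⟨(f, t), ⟨hf, ht, fun htK => hbad ?_⟩, rfl⟩
      rw [pow_succ']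
      exact (hAc f hf).comp htK hc0 (pow_le_one₀ hc0 hc1)

lemma normalOn_ball_of_contractsUnitDisk (hA : A.Finite) (hAc : ∀ f ∈ A, ContractsUnitDisk c f)
    (hc0 : 0 ≤ c) (hc1 : c < 1) : NormalOn (semigroupGen A) (ball 0 1) := by
  intro s hs
  by_cases hrep : ∃ g, ∃ᶠ n in atTop, s n = g
  · obtain ⟨g, hg⟩ := hrep
    obtain ⟨ψ, hψ, hψg⟩ := extraction_of_frequently_atTop hg
    refine ⟨ψ, hψ, .inl ⟨g, ?_⟩⟩
    simp only [hψg]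
    exact fun u hu _ _ => ⟨univ, univ_mem, .of_forall fun _ _ _ => refl_mem_uniformity hu⟩
  push Not at hrep
  refine ⟨id, strictMono_id, .inl ⟨fun _ => 0, ?_⟩⟩
  refine TendstoUniformlyOn.tendstoLocallyUniformlyOn (Metric.tendstoUniformlyOn_iff.2 ?_)
  intro ε hε
  obtain ⟨K, hK⟩ := exists_pow_lt_of_lt_one hε hc1
  have hgood : ∀ᶠ n in atTop, ContractsUnitDisk (c ^ K) (s n) := by
    filter_upwards [(eventually_all_finite
      (finite_not_contractsUnitDisk_pow hA hAc hc0 hc1.le K)).2 fun g _ => hrep g] with n hn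
    by_contra hbad
    exact hn (s n) ⟨hs n, hbad⟩ rfl
  filter_upwards [hgood] with n hn z hz
  have hz1 : ‖z‖ < 1 := by simpa using hz
  calc dist 0 (s n z) = ‖s n z‖ := by simp
    _ ≤ c ^ K * ‖z‖ := hn z hz1.le
    _ ≤ c ^ K := mul_le_of_le_one_right (pow_nonneg hc0 K) hz1.le
    _ < ε := hK

end Contracting

lemma NormalOn.of_subset {𝔉 𝔊 : Set (ℂ → ℂ)} {U : Set ℂ} (h : NormalOn 𝔊 U) (h𝔉 : 𝔉 ⊆ 𝔊) :
    NormalOn 𝔉 U :=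
  fun s hs => h s fun n => h𝔉 (hs n)

lemma subset_fatouSetOfFamily {𝔉 : Set (ℂ → ℂ)} {U : Set ℂ} (hU : IsOpen U)
    (h : NormalOn 𝔉 U) : U ⊆ fatouSetOfFamily 𝔉 :=
  fun _ hz => ⟨U, hU, hz, h⟩

/- Limits on `φ '' B` are read off through a right inverse `σ` of `φ` on `B`; the compact set
`C` makes `φ ⁻¹' K ∩ C` compact for compact `K`. -/
lemma NormalOn.image {𝔉 : Set (ℂ → ℂ)} {φ : ℂ → ℂ} (hφ : Continuous φ) {V C B : Set ℂ}
    (hV : IsOpen V) (hC : IsCompact C) (hCV : C ⊆ V) (hBC : B ⊆ C) (hB : IsOpen (φ '' B))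
    (h : NormalOn ((· ∘ φ) '' 𝔉) V) : NormalOn 𝔉 (φ '' B) := by
  intro s hs
  obtain ⟨ψ, hψ, hconv⟩ := h (fun n => s n ∘ φ) fun n => ⟨s n, hs n, rfl⟩
  refine ⟨ψ, hψ, ?_⟩
  have hpre : ∀ K, IsCompact K → IsCompact (φ ⁻¹' K ∩ C) ∧ φ ⁻¹' K ∩ C ⊆ V := fun K hK =>
    ⟨hC.inter_left (hK.isClosed.preimage hφ), fun _ hx => hCV hx.2⟩
  rcases hconv with ⟨g, hg⟩ | hdiv
  · set σ := invFunOn φ B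
    refine .inl ⟨g ∘ σ, (tendstoLocallyUniformlyOn_iff_forall_isCompact hB).2
      fun K hKB hK => ?_⟩
    have hσ : ∀ w ∈ K, σ w ∈ B ∧ φ (σ w) = w := fun w hw =>
      ⟨invFunOn_mem (hKB hw), invFunOn_eq (hKB hw)⟩
    have hgK := ((tendstoLocallyUniformlyOn_iff_forall_isCompact hV).1 hg _ (hpre K hK).2
      (hpre K hK).1).comp σ
    refine (hgK.mono fun w hw => ?_).congr (.of_forall fun n w hw => ?_)
    · exact ⟨by simpa [(hσ w hw).2] using hw, hBC (hσ w hw).1⟩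
    · simp [(hσ w hw).2]
  · refine .inr fun K hKB hK M => ?_
    filter_upwards [hdiv _ (hpre K hK).2 (hpre K hK).1 M] with n hn w hw
    obtain ⟨a, ha, rfl⟩ := hKB hw
    exact hn a ⟨hw, hBC ha⟩

lemma mapsTo_fatouSetOfFamily {𝔉 : Set (ℂ → ℂ)} {φ : ℂ → ℂ} (hφ : Continuous φ)
    (hφo : IsOpenMap φ) (h𝔉 : ∀ f ∈ 𝔉, f ∘ φ ∈ 𝔉) :
    MapsTo φ (fatouSetOfFamily 𝔉) (fatouSetOfFamily 𝔉) := by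
  rintro z ⟨V, hV, hzV, hN⟩
  obtain ⟨r, hr, hrV⟩ := nhds_basis_closedBall.mem_iff.1 (hV.mem_nhds hzV)
  have hopen := hφo _ (isOpen_ball (x := z) (ε := r))
  refine ⟨_, hopen, mem_image_of_mem φ (mem_ball_self hr), ?_⟩
  exact (hN.of_subset (image_subset_iff.2 h𝔉)).image hφ hV (isCompact_closedBall z r) hrV
    ball_subset_closedBall hopen

lemma mapsTo_fatouSet {φ : ℂ → ℂ} (hφ : Continuous φ) (hφo : IsOpenMap φ) :
    MapsTo φ (fatouSet φ) (fatouSet φ) :=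
  mapsTo_fatouSetOfFamily hφ hφo <| by
    rintro _ ⟨n, -, rfl⟩
    exact ⟨n + 1, n.succ_pos, iterate_succ φ n⟩

lemma liesInPeriodicComponent_of_isFixedPt {φ : ℂ → ℂ} (hφ : Continuous φ)
    (hφo : IsOpenMap φ) {D : Set ℂ} (hD : IsPreconnected D) (hDF : D ⊆ fatouSet φ) {z : ℂ}
    (hzD : z ∈ D) (hz : IsFixedPt φ z) : LiesInPeriodicComponent φ D := by
  have hzF := hDF hzD
  refine ⟨connectedComponentIn (fatouSet φ) z, ⟨⟨z, hzF, rfl⟩, 1, one_pos, ?_⟩,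
    hD.subset_connectedComponentIn hzD hDF⟩
  rw [iterate_one]
  refine (isPreconnected_connectedComponentIn.image φ hφ.continuousOn).subset_connectedComponentIn
    ⟨z, mem_connectedComponentIn hzF, hz⟩ ?_
  exact image_subset_iff.2 fun w hw =>
    mapsTo_fatouSet hφ hφo (connectedComponentIn_subset _ _ hw)

lemma isOpenMap_of_deriv_ne_zero {φ : ℂ → ℂ} (hφ : Differentiable ℂ φ) {z : ℂ}
    (hz : deriv φ z ≠ 0) : IsOpenMap φ := by
  refine (hφ.differentiableOn.analyticOnNhd isOpen_univ).is_constant_or_isOpenMap.resolve_left ?_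
  rintro ⟨w, hw⟩
  exact hz (by simp [show φ = fun _ => w from funext hw])

lemma fixing_zero_of_mem_semigroupGen {A : Set (ℂ → ℂ)}
    (hA : ∀ f ∈ A, Differentiable ℂ f ∧ f 0 = 0 ∧ deriv f 0 ≠ 0) {s : ℂ → ℂ}
    (hs : s ∈ semigroupGen A) : Differentiable ℂ s ∧ s 0 = 0 ∧ deriv s 0 ≠ 0 := by
  refine semigroupGen_subset (P := {f | Differentiable ℂ f ∧ f 0 = 0 ∧ deriv f 0 ≠ 0}) hA ?_ hs
  rintro f ⟨hf, hf0, hf'⟩ g ⟨hg, hg0, hg'⟩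
  refine ⟨hf.comp hg, by simp [hg0, hf0], ?_⟩
  rw [deriv_comp 0 (hf _) (hg 0), hg0]
  exact mul_ne_zero hf' hg'

lemma not_isTrivialSemigroup_of_norm_deriv_eq {S : Set (ℂ → ℂ)}
    (hS : ∀ s ∈ S, DifferentiableAt ℂ s 0 ∧ s 0 = 0) {f g : ℂ → ℂ} (hf : f ∈ S)
    (hg : g ∈ S) (hfg : deriv f 0 ≠ deriv g 0) (hnorm : ‖deriv f 0‖ = ‖deriv g 0‖)
    (h0 : ‖deriv f 0‖ ≠ 0) (h1 : ‖deriv f 0‖ ≠ 1) : ¬ IsTrivialSemigroup S := by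
  rintro ⟨φ, rfl⟩
  obtain ⟨hφ, hφ0⟩ := hS φ (self_mem_iteratesOf φ)
  obtain ⟨n, -, rfl⟩ := hf
  obtain ⟨m, -, rfl⟩ := hg
  simp only [fun k => (hφ.hasDerivAt.iterate 0 hφ0 k).deriv, norm_pow] at hfg hnorm h0 h1
  have ht0 : 0 < ‖deriv φ 0‖ := (norm_nonneg _).lt_of_ne' fun h => h0 (by simp_all)
  have ht1 : ‖deriv φ 0‖ ≠ 1 := fun h => h1 (by simp [h])
  exact hfg (by rw [pow_right_injective₀ ht0 ht1 hnorm])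

/- A periodic polynomial `p` takes the value `p 0` on the infinite set `ℕ w`, so it is
constant. -/
lemma transcendentalEntire_of_periodic {f : ℂ → ℂ} (hf : Differentiable ℂ f) {w : ℂ}
    (hw : w ≠ 0) (hper : Periodic f w) {z : ℂ} (hz : f z ≠ f 0) : TranscendentalEntire f := by
  refine ⟨hf, fun ⟨p, hp⟩ => hz ?_⟩
  have hroots : range (fun n : ℕ => (n : ℂ) * w) ⊆ {x | (p - Polynomial.C (f 0)).IsRoot x} := by
    rintro _ ⟨n, rfl⟩
    simp [← hp, hper.nat_mul_eq]
  have hconst := Polynomial.eq_zero_of_infinite_isRoot _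
    ((infinite_range_of_injective fun m n h => by simpa [hw] using h).mono hroots)
  simpa [sub_eq_zero, hp] using congrArg (Polynomial.eval z) hconst

noncomputable def scaledExpSubOne (a : ℂ) : ℂ → ℂ := fun z => a * (exp z - 1)

lemma differentiable_scaledExpSubOne (a : ℂ) : Differentiable ℂ (scaledExpSubOne a) :=
  (differentiable_exp.sub_const 1).const_mul a

lemma deriv_scaledExpSubOne_zero (a : ℂ) : deriv (scaledExpSubOne a) 0 = a :=
  (((hasDerivAt_exp 0).sub_const 1).const_mul a).deriv.trans (by simp)

lemma contractsUnitDisk_scaledExpSubOne (a : ℂ) :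
    ContractsUnitDisk (2 * ‖a‖) (scaledExpSubOne a) := fun z hz =>
  calc ‖a * (exp z - 1)‖ = ‖a‖ * ‖exp z - 1‖ := norm_mul _ _
    _ ≤ ‖a‖ * (2 * ‖z‖) := mul_le_mul_of_nonneg_left (norm_exp_sub_one_le hz) (norm_nonneg a)
    _ = 2 * ‖a‖ * ‖z‖ := by ring

lemma transcendentalEntire_scaledExpSubOne {a : ℂ} (ha : a ≠ 0) :
    TranscendentalEntire (scaledExpSubOne a) :=
  transcendentalEntire_of_periodic (differentiable_scaledExpSubOne a)
    (w := 2 * Real.pi * I) (by simp [Real.pi_ne_zero, I_ne_zero])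
    (fun z => by simp [scaledExpSubOne, exp_periodic z]) (z := log 2)
    (by norm_num [scaledExpSubOne, exp_log two_ne_zero, ha])

theorem statement_2 :
    ∃ f g h : ℂ → ℂ, TranscendentalEntire f ∧ TranscendentalEntire g ∧ TranscendentalEntire h ∧
      ¬ IsTrivialSemigroup (semigroupGen {f, g, h}) ∧
      ∃ D : Set ℂ, IsPlaneDomain D ∧ SimplyConnectedSpace D ∧
        D ⊆ fatouSetOfFamily (semigroupGen {f, g, h}) ∧
        ∀ φ : ℂ → ℂ, φ ∈ semigroupGen {f, g, h} → LiesInPeriodicComponent φ D := by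
  set A : Set (ℂ → ℂ) :=
    {scaledExpSubOne (1 / 8), scaledExpSubOne (-(1 / 8)), scaledExpSubOne (I / 8)}
  have hA : ∀ f ∈ A, ∃ a : ℂ, a ≠ 0 ∧ ‖a‖ = 1 / 8 ∧ f = scaledExpSubOne a := by
    rintro f (rfl | rfl | rfl) <;> exact ⟨_, by simp, by simp, rfl⟩
  have hAc : ∀ f ∈ A, ContractsUnitDisk (1 / 4) f := fun f hf => by
    obtain ⟨a, -, ha, rfl⟩ := hA f hf
    convert contractsUnitDisk_scaledExpSubOne a using 1
    norm_num [ha]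
  have hS : ∀ s ∈ semigroupGen A, Differentiable ℂ s ∧ s 0 = 0 ∧ deriv s 0 ≠ 0 :=
    fun s => fixing_zero_of_mem_semigroupGen fun f hf => by
      obtain ⟨a, ha, -, rfl⟩ := hA f hf
      exact ⟨differentiable_scaledExpSubOne a, (hAc _ hf).map_zero,
        by rwa [deriv_scaledExpSubOne_zero]⟩
  have hN : NormalOn (semigroupGen A) (ball 0 1) :=
    normalOn_ball_of_contractsUnitDisk (toFinite A) hAc (by norm_num) (by norm_num)
  have hball : IsConnected (ball (0 : ℂ) 1) :=
    (convex_ball 0 1).isConnected (nonempty_ball.2 one_pos)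
  refine ⟨_, _, _, transcendentalEntire_scaledExpSubOne (by norm_num),
    transcendentalEntire_scaledExpSubOne (by norm_num),
    transcendentalEntire_scaledExpSubOne (by simp), ?_, ball 0 1, ⟨isOpen_ball, hball⟩,
    @SimplyConnectedSpace.ofContractible _ _ ((convex_ball 0 1).contractibleSpace hball.nonempty),
    subset_fatouSetOfFamily isOpen_ball hN, fun φ hφ => ?_⟩
  · refine not_isTrivialSemigroup_of_norm_deriv_eq (fun s hs => ⟨(hS s hs).1 0, (hS s hs).2.1⟩)
      (.base (mem_insert _ _)) (.base (mem_insert_of_mem _ (mem_insert _ _))) ?_ ?_ ?_ ?_ <;>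
      norm_num [deriv_scaledExpSubOne_zero]
  · obtain ⟨hφd, hφ0, hφ'⟩ := hS φ hφ
    have hF : ball 0 1 ⊆ fatouSet φ :=
      subset_fatouSetOfFamily isOpen_ball (hN.of_subset (iteratesOf_subset_semigroupGen hφ))
    exact liesInPeriodicComponent_of_isFixedPt hφd.continuous
      (isOpenMap_of_deriv_ne_zero hφd hφ') hball.isPreconnected hF (mem_ball_self one_pos) hφ0
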